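/- arXiv:2508.18697 — 3 statements merged into one kernel-verified Lean document; each statement's English description precedes it below -/
import Mathlib

section
/- Let α ≥ 0, Q = 2α+4, 1 ≤ p < ∞, and s > 0. Then ∫_{𝕂̂} exp(−s p |(λ,m)|²) dγ_α(λ,m) = (s^{−Q/4} / p^{Q/4}) · Γ(Q/4) · Σ_{m≥0} L_m^α(0) / (4m+2α+2)^{α+2}, and this quantity is finite. Consequently the function g_s(λ,m) = exp(−s |(λ,m)|²) belongs to L^p(𝕂̂, γ_α), with ‖g_s‖_p ≤ C_{p,α} · s^{−Q/(4p)} for a constant C_{p,α} depending only on p and α. -/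
open MeasureTheory Real

noncomputable section

/-- The measure `m_α` on the Laguerre hypergroup `𝕂 = [0,∞) × ℝ`, realized as a measure on
`ℝ × ℝ` supported on `{x ≥ 0}`, with density `(π Γ(α+1))⁻¹ x^{2α+1}`. -/
def mAlpha (α : ℝ) : Measure (ℝ × ℝ) :=
  volume.withDensity (fun q =>
    if 0 ≤ q.1 then ENNReal.ofReal ((Real.pi * Real.Gamma (α + 1))⁻¹ * q.1 ^ (2 * α + 1)) else 0)

/-- `L_m^α(0) = Γ(m+α+1)/(m! Γ(α+1))`. -/
def lag0 (α : ℝ) (m : ℕ) : ℝ :=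
  Real.Gamma (m + α + 1) / (m.factorial * Real.Gamma (α + 1))

/-- The Plancherel measure `γ_α` on `𝕂̂ = ℝ × ℕ`:
`∫ g dγ_α = Σ_m L_m^α(0) ∫_ℝ g(λ,m) |λ|^{α+1} dλ`. -/
def gammaAlpha (α : ℝ) : Measure (ℝ × ℕ) :=
  Measure.sum (fun m : ℕ =>
    Measure.map (fun l : ℝ => (l, m))
      (volume.withDensity (fun l : ℝ => ENNReal.ofReal (lag0 α m * |l| ^ (α + 1)))))

/-- The generalized Laguerre polynomial `L_m^α`. -/
def laguerreL (α : ℝ) (m : ℕ) (y : ℝ) : ℝ :=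
  ∑ k ∈ Finset.range (m + 1),
    (-1 : ℝ) ^ k * Real.Gamma (m + α + 1) * y ^ k /
      (Real.Gamma (k + α + 1) * (m - k).factorial * k.factorial)

/-- The Laguerre functions `φ_{(λ,m)}`. -/
def phiLag (α : ℝ) (l : ℝ) (m : ℕ) (q : ℝ × ℝ) : ℂ :=
  ((m.factorial * Real.Gamma (α + 1) / Real.Gamma (m + α + 1) : ℝ) : ℂ) *
    Complex.exp (Complex.I * l * q.2) *
    ((Real.exp (-(|l| * q.1 ^ 2) / 2) * laguerreL α m (|l| * q.1 ^ 2) : ℝ) : ℂ)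

/-- The Fourier–Laguerre transform of `f ∈ L¹(𝕂, m_α)`. -/
def fourierLaguerre (α : ℝ) (f : ℝ × ℝ → ℂ) (p : ℝ × ℕ) : ℂ :=
  ∫ q, f q * phiLag α (-p.1) p.2 q ∂(mAlpha α)

/-- The homogeneous norm on `𝕂`: `|(x,t)| = (x⁴ + 4t²)^{1/4}`. -/
def normK (q : ℝ × ℝ) : ℝ := (q.1 ^ 4 + 4 * q.2 ^ 2) ^ ((1 : ℝ) / 4)

/-- The quasi-norm on `𝕂̂`: `|(λ,m)| = 4|λ|(m + (α+1)/2)`. -/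
def normKhat (α : ℝ) (q : ℝ × ℕ) : ℝ := 4 * |q.1| * ((q.2 : ℝ) + (α + 1) / 2)

end

noncomputable section

namespace Stmt8Aux

lemma integrable_abs_rpow_mul_exp {b : ℝ} (hb : 0 < b) {t : ℝ} (ht : -1 < t) :
    MeasureTheory.Integrable (fun x : ℝ => |x| ^ t * Real.exp (-b * x ^ 2)) := by
  have h1 : MeasureTheory.IntegrableOn (fun x : ℝ => |x| ^ t * Real.exp (-b * x ^ 2))
      (Set.Ioi 0) := by
    refine (integrableOn_rpow_mul_exp_neg_mul_sq hb ht).congr_fun (fun x hx => ?_)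
      measurableSet_Ioi
    rw [abs_of_pos hx]
  have h2 : MeasureTheory.IntegrableOn (fun x : ℝ => |x| ^ t * Real.exp (-b * x ^ 2))
      (Set.Iic 0) := by
    rw [← Measure.map_neg_eq_self (volume : Measure ℝ)]
    have m : MeasurableEmbedding fun x : ℝ => -x := (Homeomorph.neg ℝ).measurableEmbedding
    rw [m.integrableOn_map_iff]
    simp_rw [Function.comp_def, abs_neg, neg_sq, Set.neg_preimage, Set.neg_Iic, neg_zero]
    exact (integrableOn_Ici_iff_integrableOn_Ioi).mpr h1
  rw [← MeasureTheory.integrableOn_univ, ← Set.Iic_union_Ioi (a := (0:ℝ)),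
    MeasureTheory.integrableOn_union]
  exact ⟨h2, h1⟩

lemma integral_abs_rpow_mul_exp {t b : ℝ} (ht : -1 < t) (hb : 0 < b) :
    ∫ x : ℝ, |x| ^ t * Real.exp (-b * x ^ 2) = b ^ (-(t + 1) / 2) * Real.Gamma ((t + 1) / 2) := by
  have h := integral_comp_abs (f := fun y : ℝ => y ^ t * Real.exp (-b * y ^ 2))
  simp only [sq_abs] at h
  rw [h]
  have := integral_rpow_mul_exp_neg_mul_rpow two_pos ht hb
  simp_rw [rpow_two] at this
  rw [this]
  ring


lemma gamma_interp {x θ : ℝ} (hx : 1 ≤ x) (h0 : 0 ≤ θ) (h1 : θ ≤ 1) :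
    Real.Gamma (x + θ) ≤ Real.Gamma x * x ^ θ := by
  have hxpos : 0 < x := lt_of_lt_of_le one_pos hx
  rcases eq_or_lt_of_le h0 with h | h0'
  · simp [← h, Real.rpow_zero]
  rcases eq_or_lt_of_le h1 with h | h1'
  · rw [h, Real.Gamma_add_one hxpos.ne', Real.rpow_one]; ring_nf; exact le_refl _
  have key := Real.Gamma_mul_add_mul_le_rpow_Gamma_mul_rpow_Gamma hxpos
    (by linarith : (0:ℝ) < x + 1) (by linarith : (0:ℝ) < 1 - θ) h0' (by ring)
  have e1 : (1 - θ) * x + θ * (x + 1) = x + θ := by ring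
  rw [e1, Real.Gamma_add_one hxpos.ne', Real.mul_rpow hxpos.le (Real.Gamma_pos_of_pos hxpos).le]
    at key
  calc Real.Gamma (x + θ) ≤ Real.Gamma x ^ (1 - θ) * (x ^ θ * Real.Gamma x ^ θ) := key
    _ = Real.Gamma x ^ ((1 - θ) + θ) * x ^ θ := by
        rw [Real.rpow_add (Real.Gamma_pos_of_pos hxpos)]; ring
    _ = Real.Gamma x * x ^ θ := by norm_num

lemma fact_le (m n : ℕ) : ((m + n).factorial : ℝ) ≤ (m.factorial : ℝ) * ((m : ℝ) + n + 1) ^ n := by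
  induction n with
  | zero => simp
  | succ n ih =>
    have h1 : ((m + (n+1)).factorial : ℝ) = ((m + n : ℕ) + 1) * ((m+n).factorial : ℝ) := by
      rw [show m + (n+1) = (m + n) + 1 by ring, Nat.factorial_succ]; push_cast; ring
    rw [h1]
    have h2 : ((m + n : ℕ) : ℝ) + 1 ≤ (m : ℝ) + (n+1) + 1 := by push_cast; linarith
    have h3 : ((m : ℝ) + n + 1) ^ n ≤ ((m : ℝ) + (n+1) + 1) ^ n := by
      apply pow_le_pow_left₀ (by positivity); push_cast; linarith
    calc (((m + n : ℕ) : ℝ) + 1) * ((m+n).factorial : ℝ)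
        ≤ ((m : ℝ) + (n+1) + 1) * ((m.factorial : ℝ) * ((m : ℝ) + n + 1) ^ n) := by
          apply mul_le_mul h2 ih (by positivity) (by positivity)
      _ ≤ ((m : ℝ) + (n+1) + 1) * ((m.factorial : ℝ) * ((m : ℝ) + (n+1) + 1) ^ n) := by
          apply mul_le_mul_of_nonneg_left _ (by positivity)
          exact mul_le_mul_of_nonneg_left h3 (by positivity)
      _ = (m.factorial : ℝ) * ((m : ℝ) + (n+1) + 1) ^ (n+1) := by ring
      _ ≤ (m.factorial : ℝ) * ((m : ℝ) + ((n+1:ℕ):ℝ) + 1) ^ (n+1) := by push_cast; exact le_refl _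

lemma gautschi {α : ℝ} (hα : 0 ≤ α) (m : ℕ) :
    Real.Gamma ((m : ℝ) + α + 1) ≤ (m.factorial : ℝ) * (4 * (m : ℝ) + 2 * α + 2) ^ α := by
  set n : ℕ := ⌊α⌋₊ with hn
  set θ : ℝ := α - n with hθ
  have hθ0 : 0 ≤ θ := by simp [hθ]; exact Nat.floor_le hα
  have hθ1 : θ ≤ 1 := by
    have := (Nat.lt_floor_add_one α).le
    simp only [hθ]; linarith
  have hnα : (n : ℝ) ≤ α := Nat.floor_le hα
  set x : ℝ := (m : ℝ) + n + 1 with hx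
  have hx1 : 1 ≤ x := by
    have h0 : (0:ℝ) ≤ (m:ℝ) + n := by positivity
    rw [hx]; linarith
  have e1 : (m : ℝ) + α + 1 = x + θ := by simp [hx, hθ]; ring
  have e2 : Real.Gamma x = ((m + n).factorial : ℝ) := by
    rw [hx, show (m : ℝ) + n + 1 = ((m + n : ℕ) : ℝ) + 1 by push_cast; ring,
      Real.Gamma_nat_eq_factorial]
  have step1 : Real.Gamma ((m : ℝ) + α + 1) ≤ ((m+n).factorial : ℝ) * x ^ θ := by
    rw [e1, ← e2]; exact gamma_interp hx1 hθ0 hθ1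
  have step2 : ((m+n).factorial : ℝ) * x ^ θ ≤ (m.factorial : ℝ) * x ^ n * x ^ θ := by
    apply mul_le_mul_of_nonneg_right _ (Real.rpow_nonneg (by positivity) _)
    have := fact_le m n
    calc ((m+n).factorial : ℝ) ≤ (m.factorial : ℝ) * ((m : ℝ) + n + 1) ^ n := this
      _ = (m.factorial : ℝ) * x ^ n := by rw [hx]
  have step3 : (m.factorial : ℝ) * x ^ n * x ^ θ = (m.factorial : ℝ) * x ^ α := by
    rw [mul_assoc, ← Real.rpow_natCast x n, ← Real.rpow_add (by positivity : (0:ℝ) < x)]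
    congr 2
    simp [hθ]
  have step4 : x ^ α ≤ (4 * (m : ℝ) + 2 * α + 2) ^ α := by
    apply Real.rpow_le_rpow (by positivity) _ hα
    rw [hx]; linarith
  calc Real.Gamma ((m : ℝ) + α + 1) ≤ (m.factorial : ℝ) * x ^ n * x ^ θ := step1.trans step2
    _ = (m.factorial : ℝ) * x ^ α := step3
    _ ≤ (m.factorial : ℝ) * (4 * (m : ℝ) + 2 * α + 2) ^ α := by
        apply mul_le_mul_of_nonneg_left step4 (by positivity)

lemma summable_term {α : ℝ} (hα : 0 ≤ α) :
    Summable (fun m : ℕ => lag0 α m / (4 * (m : ℝ) + 2 * α + 2) ^ (α + 2)) := by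
  have hG : 0 < Real.Gamma (α + 1) := Real.Gamma_pos_of_pos (by linarith)
  have hlagnn : ∀ m : ℕ, 0 ≤ lag0 α m := by
    intro m
    have h1 : 0 < Real.Gamma ((m : ℝ) + α + 1) := Real.Gamma_pos_of_pos (by positivity)
    have h3 : (0:ℝ) < m.factorial := by exact_mod_cast m.factorial_pos
    unfold lag0; positivity
  have hsum2 : Summable (fun m : ℕ => (Real.Gamma (α+1))⁻¹ * (1 / ((m:ℝ)+1) ^ 2)) := by
    apply Summable.mul_left
    have h0 : Summable (fun n : ℕ => 1 / (n:ℝ) ^ 2) := summable_one_div_nat_pow.mpr one_lt_two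
    have h1 := (summable_nat_add_iff 1).mpr h0
    refine h1.congr fun n => ?_
    push_cast; ring
  apply Summable.of_nonneg_of_le (fun m => div_nonneg (hlagnn m) (by positivity)) _ hsum2
  intro m
  set D : ℝ := 4 * (m:ℝ) + 2 * α + 2 with hD
  have hDpos : 0 < D := by positivity
  have hfact : (0:ℝ) < m.factorial := by exact_mod_cast m.factorial_pos
  have h1 : lag0 α m ≤ D ^ α / Real.Gamma (α + 1) := by
    unfold lag0
    rw [div_le_div_iff₀ (by positivity) hG]
    calc Real.Gamma ((m:ℝ) + α + 1) * Real.Gamma (α+1)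
        ≤ ((m.factorial : ℝ) * D ^ α) * Real.Gamma (α+1) :=
          mul_le_mul_of_nonneg_right (gautschi hα m) hG.le
      _ = D ^ α * ((m.factorial : ℝ) * Real.Gamma (α+1)) := by ring
  calc lag0 α m / D ^ (α+2) ≤ (D ^ α / Real.Gamma (α+1)) / D ^ (α+2) := by gcongr
    _ = (D ^ α / D ^ (α+2)) * (Real.Gamma (α+1))⁻¹ := by ring
    _ = (D ^ 2)⁻¹ * (Real.Gamma (α+1))⁻¹ := by
        rw [← Real.rpow_sub hDpos, show α - (α+2) = -(2:ℝ) by ring, Real.rpow_neg hDpos.le,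
          Real.rpow_two]
    _ ≤ (((m:ℝ)+1) ^ 2)⁻¹ * (Real.Gamma (α+1))⁻¹ := by
        gcongr
        rw [hD]; linarith
    _ = (Real.Gamma (α+1))⁻¹ * (1 / ((m:ℝ)+1) ^ 2) := by ring

lemma key (α : ℝ) (hα : 0 ≤ α) {c : ℝ} (hc : 0 < c) :
    (∫⁻ q, ENNReal.ofReal (Real.exp (-(c * normKhat α q ^ 2))) ∂(gammaAlpha α)) =
      ENNReal.ofReal (c ^ (-((2 * α + 4) / 4)) * Real.Gamma ((2 * α + 4) / 4) *
        ∑' m : ℕ, lag0 α m / (4 * (m : ℝ) + 2 * α + 2) ^ (α + 2)) := by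
  have hE : (2 * α + 4) / 4 = (α + 2) / 2 := by ring
  rw [hE]
  have hGpos : 0 < Real.Gamma ((α + 2) / 2) := Real.Gamma_pos_of_pos (by linarith)
  have hlag0 : ∀ m : ℕ, 0 ≤ lag0 α m := by
    intro m
    have h1 : 0 < Real.Gamma ((m : ℝ) + α + 1) := Real.Gamma_pos_of_pos (by positivity)
    have h2 : 0 < Real.Gamma (α + 1) := Real.Gamma_pos_of_pos (by linarith)
    have h3 : (0:ℝ) < m.factorial := by exact_mod_cast m.factorial_pos
    unfold lag0; positivity
  have hfmeas : Measurable (fun q : ℝ × ℕ =>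
      ENNReal.ofReal (Real.exp (-(c * normKhat α q ^ 2)))) := by
    apply ENNReal.measurable_ofReal.comp
    apply Real.measurable_exp.comp
    apply Measurable.neg
    apply Measurable.const_mul
    apply Measurable.pow _ measurable_const
    unfold normKhat
    fun_prop
  rw [gammaAlpha, MeasureTheory.lintegral_sum_measure]
  have per_m : ∀ m : ℕ,
      (∫⁻ q, ENNReal.ofReal (Real.exp (-(c * normKhat α q ^ 2)))
        ∂(Measure.map (fun l : ℝ => (l, m))
          (volume.withDensity (fun l : ℝ => ENNReal.ofReal (lag0 α m * |l| ^ (α + 1)))))) =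
      ENNReal.ofReal ((c ^ (-((α + 2) / 2)) * Real.Gamma ((α + 2) / 2)) *
        (lag0 α m / (4 * (m : ℝ) + 2 * α + 2) ^ (α + 2))) := by
    intro m
    set D : ℝ := 4 * (m : ℝ) + 2 * α + 2 with hD
    have hDpos : 0 < D := by positivity
    set b : ℝ := c * D ^ 2 with hb
    have hbpos : 0 < b := by positivity
    rw [MeasureTheory.lintegral_map hfmeas measurable_prodMk_right]
    have hdens : Measurable fun l : ℝ => ENNReal.ofReal (lag0 α m * |l| ^ (α + 1)) := by
      fun_prop
    have hg : Measurable fun a : ℝ => ENNReal.ofReal (Real.exp (-(c * normKhat α (a, m) ^ 2))) :=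
      hfmeas.comp measurable_prodMk_right
    rw [MeasureTheory.lintegral_withDensity_eq_lintegral_mul _ hdens hg]
    have hexp : ∀ l : ℝ, -(c * normKhat α (l, m) ^ 2) = -b * l ^ 2 := by
      intro l
      have h1 : normKhat α (l, m) ^ 2 = D ^ 2 * |l| ^ 2 := by
        simp only [normKhat, hD]; ring
      rw [h1, sq_abs, hb]; ring
    have heq : ∀ l : ℝ,
        (fun l : ℝ => ENNReal.ofReal (lag0 α m * |l| ^ (α + 1))) l *
          ENNReal.ofReal (Real.exp (-(c * normKhat α (l, m) ^ 2))) =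
        ENNReal.ofReal (lag0 α m * (|l| ^ (α + 1) * Real.exp (-b * l ^ 2))) := by
      intro l
      rw [hexp l, ← ENNReal.ofReal_mul (mul_nonneg (hlag0 m) (by positivity)), mul_assoc]
    simp only [Pi.mul_apply]
    simp_rw [heq]
    have hInt : MeasureTheory.Integrable
        (fun l : ℝ => lag0 α m * (|l| ^ (α + 1) * Real.exp (-b * l ^ 2))) :=
      (integrable_abs_rpow_mul_exp hbpos (by linarith : (-1:ℝ) < α + 1)).const_mul _
    rw [← MeasureTheory.ofReal_integral_eq_lintegral_ofReal hInt
      (Filter.Eventually.of_forall fun l => mul_nonneg (hlag0 m) (by positivity))]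
    rw [MeasureTheory.integral_const_mul, integral_abs_rpow_mul_exp
      (by linarith : (-1:ℝ) < α + 1) hbpos]
    congr 1
    have e2 : (α + 1 + 1) = α + 2 := by ring
    rw [e2]
    have hbE : b ^ (-(α + 2) / 2) = c ^ (-((α + 2) / 2)) * (D ^ (α + 2))⁻¹ := by
      rw [hb, Real.mul_rpow hc.le (by positivity)]
      congr 1
      · ring_nf
      · rw [← Real.rpow_natCast D 2, ← Real.rpow_mul hDpos.le, ← Real.rpow_neg hDpos.le]
        congr 1
        push_cast; ring
    rw [hbE]
    rw [div_eq_mul_inv]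
    ring
  rw [tsum_congr per_m]
  have hK : 0 ≤ c ^ (-((α + 2) / 2)) * Real.Gamma ((α + 2) / 2) := by positivity
  simp_rw [ENNReal.ofReal_mul hK]
  rw [ENNReal.tsum_mul_left,
    ← ENNReal.ofReal_tsum_of_nonneg (fun m => div_nonneg (hlag0 m) (by positivity)) (summable_term hα),
    ← ENNReal.ofReal_mul hK]

end Stmt8Aux
end

/-- for `α ≥ 0`, `Q = 2α+4`, `1 ≤ p < ∞`, `s > 0`:
`∫ exp(−sp|(λ,m)|²) dγ_α = (s^{−Q/4}/p^{Q/4}) Γ(Q/4) Σ_m L_m^α(0)/(4m+2α+2)^{α+2} < ∞`;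
consequently `g_s(λ,m) = exp(−s|(λ,m)|²)` lies in `L^p(𝕂̂, γ_α)` with
`‖g_s‖_p ≤ C_{p,α} s^{−Q/(4p)}`. -/
theorem stmt8 (α p s : ℝ) (hα : 0 ≤ α) (hp : 1 ≤ p) (hs : 0 < s) :
    (∫⁻ q, ENNReal.ofReal (Real.exp (-(s * p * normKhat α q ^ 2))) ∂(gammaAlpha α)) =
      ENNReal.ofReal ((s ^ (-((2 * α + 4) / 4)) / p ^ ((2 * α + 4) / 4)) *
        Real.Gamma ((2 * α + 4) / 4) *
        ∑' m : ℕ, lag0 α m / (4 * (m : ℝ) + 2 * α + 2) ^ (α + 2)) ∧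
    Summable (fun m : ℕ => lag0 α m / (4 * (m : ℝ) + 2 * α + 2) ^ (α + 2)) ∧
    MeasureTheory.MemLp (fun q => Real.exp (-(s * normKhat α q ^ 2)))
      (ENNReal.ofReal p) (gammaAlpha α) ∧
    (∃ C : ℝ, 0 < C ∧ ∀ s' : ℝ, 0 < s' →
      MeasureTheory.eLpNorm (fun q => Real.exp (-(s' * normKhat α q ^ 2)))
          (ENNReal.ofReal p) (gammaAlpha α) ≤
        ENNReal.ofReal (C * s' ^ (-((2 * α + 4) / (4 * p))))) := by
  have hppos : 0 < p := lt_of_lt_of_le one_pos hp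
  set E : ℝ := (2 * α + 4) / 4 with hE
  have hEpos : 0 < E := by rw [hE]; linarith
  set T : ℝ := ∑' m : ℕ, lag0 α m / (4 * (m : ℝ) + 2 * α + 2) ^ (α + 2) with hT
  have hGpos : 0 < Real.Gamma E := Real.Gamma_pos_of_pos hEpos
  have hsummable := Stmt8Aux.summable_term hα
  have hlag0 : ∀ m : ℕ, 0 ≤ lag0 α m := by
    intro m
    have h1 : 0 < Real.Gamma ((m : ℝ) + α + 1) := Real.Gamma_pos_of_pos (by positivity)
    have h2 : 0 < Real.Gamma (α + 1) := Real.Gamma_pos_of_pos (by linarith)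
    have h3 : (0:ℝ) < m.factorial := by exact_mod_cast m.factorial_pos
    unfold lag0; positivity
  have hTpos : 0 < T := by
    have h0 : 0 < lag0 α 0 / (4 * ((0:ℕ) : ℝ) + 2 * α + 2) ^ (α + 2) := by
      have h1 : 0 < Real.Gamma (((0:ℕ) : ℝ) + α + 1) := Real.Gamma_pos_of_pos (by positivity)
      have h2 : 0 < Real.Gamma (α + 1) := Real.Gamma_pos_of_pos (by linarith)
      have hl : 0 < lag0 α 0 := by
        unfold lag0; simp only [Nat.factorial_zero, Nat.cast_one, one_mul]
        positivity
      have hd : (0:ℝ) < (4 * ((0:ℕ) : ℝ) + 2 * α + 2) ^ (α + 2) := by positivity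
      positivity
    have hle : lag0 α 0 / (4 * ((0:ℕ) : ℝ) + 2 * α + 2) ^ (α + 2) ≤ T :=
      hsummable.le_tsum 0 (fun j _ => div_nonneg (hlag0 j) (by positivity))
    linarith
  have hTnn : (0:ℝ) ≤ T := hTpos.le
  -- part 1
  have hsp : 0 < s * p := mul_pos hs hppos
  have part1 : (∫⁻ q, ENNReal.ofReal (Real.exp (-(s * p * normKhat α q ^ 2)))
      ∂(gammaAlpha α)) = ENNReal.ofReal ((s ^ (-E) / p ^ E) * Real.Gamma E * T) := by
    have h1 := Stmt8Aux.key α hα hsp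
    rw [← hE, ← hT] at h1
    rw [h1]
    congr 2
    rw [Real.mul_rpow hs.le hppos.le, Real.rpow_neg hppos.le, div_eq_mul_inv]
  -- eLpNorm formula
  have hp0 : (ENNReal.ofReal p) ≠ 0 := (ENNReal.ofReal_pos.mpr hppos).ne'
  have hptop : (ENNReal.ofReal p) ≠ ⊤ := ENNReal.ofReal_ne_top
  have hform : ∀ s' : ℝ, 0 < s' →
      MeasureTheory.eLpNorm (fun q => Real.exp (-(s' * normKhat α q ^ 2)))
        (ENNReal.ofReal p) (gammaAlpha α) =
      (ENNReal.ofReal (((s' * p) ^ (-E)) * Real.Gamma E * T)) ^ (1 / p) := by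
    intro s' hs'
    rw [MeasureTheory.eLpNorm_eq_lintegral_rpow_enorm_toReal hp0 hptop,
      ENNReal.toReal_ofReal hppos.le]
    have hint : (∫⁻ q, (‖Real.exp (-(s' * normKhat α q ^ 2))‖ₑ : ENNReal) ^ p
        ∂(gammaAlpha α)) =
        ∫⁻ q, ENNReal.ofReal (Real.exp (-(s' * p * normKhat α q ^ 2))) ∂(gammaAlpha α) := by
      apply MeasureTheory.lintegral_congr
      intro q
      rw [Real.enorm_eq_ofReal (Real.exp_nonneg _),
        ENNReal.ofReal_rpow_of_pos (Real.exp_pos _), ← Real.exp_mul]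
      congr 2
      ring
    rw [hint]
    have h1 := Stmt8Aux.key α hα (mul_pos hs' hppos)
    rw [← hE, ← hT] at h1
    rw [h1]
  -- part 3
  have hmeas : Measurable fun q : ℝ × ℕ => Real.exp (-(s * normKhat α q ^ 2)) := by
    apply Real.measurable_exp.comp
    apply Measurable.neg
    apply Measurable.const_mul
    apply Measurable.pow _ measurable_const
    unfold normKhat
    fun_prop
  have part3 : MeasureTheory.MemLp (fun q => Real.exp (-(s * normKhat α q ^ 2)))
      (ENNReal.ofReal p) (gammaAlpha α) := by
    refine ⟨hmeas.aestronglyMeasurable, ?_⟩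
    rw [hform s hs]
    exact ENNReal.rpow_lt_top_of_nonneg (by positivity) ENNReal.ofReal_ne_top
  -- part 4
  have part4 : ∃ C : ℝ, 0 < C ∧ ∀ s' : ℝ, 0 < s' →
      MeasureTheory.eLpNorm (fun q => Real.exp (-(s' * normKhat α q ^ 2)))
          (ENNReal.ofReal p) (gammaAlpha α) ≤
        ENNReal.ofReal (C * s' ^ (-((2 * α + 4) / (4 * p)))) := by
    refine ⟨(p ^ (-E) * Real.Gamma E * T) ^ (1 / p), by positivity, ?_⟩
    intro s' hs'
    rw [hform s' hs']
    apply le_of_eq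
    have hXpos : 0 < ((s' * p) ^ (-E)) * Real.Gamma E * T := by positivity
    rw [ENNReal.ofReal_rpow_of_pos hXpos]
    congr 1
    rw [Real.mul_rpow hs'.le hppos.le]
    rw [show s' ^ (-E) * p ^ (-E) * Real.Gamma E * T
        = s' ^ (-E) * (p ^ (-E) * Real.Gamma E * T) by ring]
    rw [Real.mul_rpow (by positivity) (by positivity), ← Real.rpow_mul hs'.le,
      show -E * (1 / p) = -((2 * α + 4) / (4 * p)) by
        rw [hE]; field_simp]
    ring
  exact ⟨part1, hsummable, part3, part4⟩
end

section
/- Let α ≥ 0 and r > 0, and let E_r = {(λ,m) ∈ 𝕂̂ : |(λ,m)| < r}. Then γ_α(E_r) = (2 r^{α+2}/(α+2)) · Σ_{m≥0} L_m^α(0) / (4m+2α+2)^{α+2}, and this quantity is finite. -/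
open MeasureTheory Real

lemma fact_add_le (m n : ℕ) : (m + n).factorial ≤ m.factorial * (m + n) ^ n := by
  induction n with
  | zero => simp
  | succ n ih =>
      calc (m + (n+1)).factorial = (m + n + 1) * (m + n).factorial := by
            rw [← Nat.add_assoc, Nat.factorial_succ]
        _ ≤ (m + n + 1) * (m.factorial * (m + n) ^ n) :=
            Nat.mul_le_mul_left _ ih
        _ ≤ (m + n + 1) * (m.factorial * (m + n + 1) ^ n) := by
            exact Nat.mul_le_mul_left _ (Nat.mul_le_mul_left _
              (Nat.pow_le_pow_left (Nat.le_succ _) n))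
        _ = m.factorial * (m + (n+1)) ^ (n+1) := by ring_nf
  
lemma gamma_bound (α : ℝ) (hα : 0 ≤ α) (m : ℕ) :
    Real.Gamma ((m : ℝ) + α + 1) ≤
      m.factorial * ((((⌈α⌉₊ : ℝ) + 1) * ((m : ℝ) + 1)) ^ α) := by
  set n : ℕ := ⌈α⌉₊ + 1 with hn
  have hαn : α ≤ (n : ℝ) := by
    have := Nat.le_ceil α
    push_cast [hn]; linarith
  have hn0 : (0 : ℝ) < n := by positivity
  set t : ℝ := α / n with ht
  have ht0 : 0 ≤ t := by positivity
  have ht1 : t ≤ 1 := by rw [ht, div_le_one hn0]; exact hαn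
  have hnt : (n : ℝ) * t = α := by
    rw [ht, mul_comm]; exact div_mul_cancel₀ α hn0.ne'
  have hx : ((m : ℝ) + 1) ∈ Set.Ioi (0:ℝ) := by simp; positivity
  have hy : ((m : ℝ) + 1 + n) ∈ Set.Ioi (0:ℝ) := by simp; positivity
  have hcomb : (1 - t) * ((m : ℝ) + 1) + t * ((m : ℝ) + 1 + n) = (m : ℝ) + α + 1 := by
    have : (1 - t) * ((m : ℝ) + 1) + t * ((m : ℝ) + 1 + n) = (m:ℝ) + 1 + (n:ℝ) * t := by ring
    rw [this, hnt]; ring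
  have hcx := Real.convexOn_log_Gamma.2 hx hy (show (0:ℝ) ≤ 1 - t by linarith) ht0 (show (1 - t) + t = 1 by ring)
  simp only [smul_eq_mul, Function.comp_apply] at hcx
  rw [hcomb] at hcx
  have hΓz : 0 < Real.Gamma ((m : ℝ) + α + 1) := Real.Gamma_pos_of_pos (by positivity)
  have hΓx : 0 < Real.Gamma ((m : ℝ) + 1) := Real.Gamma_pos_of_pos (by positivity)
  have hΓy : 0 < Real.Gamma ((m : ℝ) + 1 + n) := Real.Gamma_pos_of_pos (by positivity)
  have key : Real.Gamma ((m : ℝ) + α + 1) ≤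
      Real.Gamma ((m : ℝ) + 1) ^ (1 - t) * Real.Gamma ((m : ℝ) + 1 + n) ^ t := by
    have := Real.exp_le_exp.2 hcx
    rwa [Real.exp_log hΓz, Real.exp_add, mul_comm (1-t) _, mul_comm t _,
      ← Real.rpow_def_of_pos hΓx, ← Real.rpow_def_of_pos hΓy] at this
  have hΓxv : Real.Gamma ((m : ℝ) + 1) = (m.factorial : ℝ) := Real.Gamma_nat_eq_factorial m
  have hΓyv : Real.Gamma ((m : ℝ) + 1 + n) = ((m + n).factorial : ℝ) := by
    have : (m : ℝ) + 1 + n = ((m + n : ℕ) : ℝ) + 1 := by push_cast; ring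
    rw [this, Real.Gamma_nat_eq_factorial]
  rw [hΓxv, hΓyv] at key
  have hfl : ((m + n).factorial : ℝ) ≤ (m.factorial : ℝ) * ((m : ℝ) + n) ^ (n : ℕ) := by
    have := fact_add_le m n
    exact_mod_cast this
  have hfm : (0:ℝ) < m.factorial := by exact_mod_cast m.factorial_pos
  calc Real.Gamma ((m : ℝ) + α + 1)
      ≤ (m.factorial : ℝ) ^ (1 - t) * ((m + n).factorial : ℝ) ^ t := key
    _ ≤ (m.factorial : ℝ) ^ (1 - t) *
          ((m.factorial : ℝ) * ((m : ℝ) + n) ^ (n : ℕ)) ^ t := by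
        gcongr
    _ = (m.factorial : ℝ) * ((m : ℝ) + n) ^ α := by
        rw [Real.mul_rpow hfm.le (by positivity), ← mul_assoc,
          ← Real.rpow_add hfm, sub_add_cancel, Real.rpow_one,
          ← Real.rpow_natCast ((m : ℝ) + n) n, ← Real.rpow_mul (by positivity), hnt]
    _ ≤ (m.factorial : ℝ) * ((((⌈α⌉₊ : ℝ) + 1) * ((m : ℝ) + 1)) ^ α) := by
        have hnv : ((n : ℝ)) = (⌈α⌉₊ : ℝ) + 1 := by push_cast [hn]; ring
        refine mul_le_mul_of_nonneg_left (Real.rpow_le_rpow (by positivity) ?_ hα) hfm.le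
        rw [← hnv]
        nlinarith [Nat.cast_nonneg (α := ℝ) m, hn0]

lemma summable_b (α : ℝ) (hα : 0 ≤ α) :
    Summable (fun m : ℕ => lag0 α m / (4 * (m : ℝ) + 2 * α + 2) ^ (α + 2)) := by
  have hΓα : 0 < Real.Gamma (α + 1) := Real.Gamma_pos_of_pos (by linarith)
  set K : ℝ := (⌈α⌉₊ : ℝ) + 1 with hK
  have hK0 : 0 < K := by positivity
  set C : ℝ := K ^ α / Real.Gamma (α + 1) / 2 ^ (α + 2) with hC
  have hsum : Summable (fun m : ℕ => C * ((m : ℝ) + 1) ^ (-(2:ℝ))) := by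
    apply Summable.mul_left
    have h1 : Summable (fun m : ℕ => ((m : ℝ)) ^ (-(2:ℝ))) :=
      Real.summable_nat_rpow.2 (by norm_num)
    have h2 := (summable_nat_add_iff 1).2 h1
    refine h2.congr fun m => ?_
    push_cast; ring_nf
  refine Summable.of_nonneg_of_le (fun m => ?_) (fun m => ?_) hsum
  · have h1 : 0 ≤ lag0 α m := by
      have := Real.Gamma_pos_of_pos (show (0:ℝ) < (m:ℝ) + α + 1 by positivity)
      have := m.factorial_pos
      unfold lag0; positivity
    positivity
  · have hd : (0:ℝ) < 4 * (m : ℝ) + 2 * α + 2 := by positivity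
    have hm1 : (0:ℝ) < (m : ℝ) + 1 := by positivity
    have hfm : (0:ℝ) < m.factorial := by exact_mod_cast m.factorial_pos
    have hlag : lag0 α m ≤ K ^ α * ((m : ℝ) + 1) ^ α / Real.Gamma (α + 1) := by
      unfold lag0
      rw [div_le_div_iff₀ (by positivity) hΓα]
      have := gamma_bound α hα m
      calc Real.Gamma ((m:ℝ) + α + 1) * Real.Gamma (α + 1)
          ≤ (m.factorial : ℝ) * ((K * ((m : ℝ) + 1)) ^ α) * Real.Gamma (α + 1) := by
            exact mul_le_mul_of_nonneg_right this hΓα.le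
        _ = K ^ α * ((m : ℝ) + 1) ^ α * ((m.factorial : ℝ) * Real.Gamma (α + 1)) := by
            rw [Real.mul_rpow hK0.le hm1.le]; ring
    have hden : (2:ℝ) ^ (α + 2) * ((m : ℝ) + 1) ^ (α + 2)
        ≤ (4 * (m : ℝ) + 2 * α + 2) ^ (α + 2) := by
      rw [← Real.mul_rpow (by norm_num) hm1.le]
      exact Real.rpow_le_rpow (by positivity) (by linarith) (by linarith)
    calc lag0 α m / (4 * (m : ℝ) + 2 * α + 2) ^ (α + 2)
        ≤ (K ^ α * ((m : ℝ) + 1) ^ α / Real.Gamma (α + 1)) /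
            ((2:ℝ) ^ (α + 2) * ((m : ℝ) + 1) ^ (α + 2)) := by
          apply div_le_div₀ (by positivity) hlag (by positivity) hden
      _ = C * (((m : ℝ) + 1) ^ α / ((m : ℝ) + 1) ^ (α + 2)) := by
          rw [hC]; field_simp
      _ = C * ((m : ℝ) + 1) ^ (-(2:ℝ)) := by
          rw [← Real.rpow_sub hm1]
          norm_num

/-- for `α ≥ 0` and `r > 0`, with `E_r = {(λ,m) : |(λ,m)| < r}`,
`γ_α(E_r) = (2 r^{α+2}/(α+2)) Σ_m L_m^α(0)/(4m+2α+2)^{α+2}`, and this is finite. -/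
theorem stmt9 (α r : ℝ) (hα : 0 ≤ α) (hr : 0 < r) :
    gammaAlpha α {q : ℝ × ℕ | normKhat α q < r} =
      ENNReal.ofReal (2 * r ^ (α + 2) / (α + 2) *
        ∑' m : ℕ, lag0 α m / (4 * (m : ℝ) + 2 * α + 2) ^ (α + 2)) ∧
    Summable (fun m : ℕ => lag0 α m / (4 * (m : ℝ) + 2 * α + 2) ^ (α + 2)) := by
  have hb := summable_b α hα
  refine ⟨?_, hb⟩
  have hΓα : 0 < Real.Gamma (α + 1) := Real.Gamma_pos_of_pos (by linarith)
  have hα2 : (0:ℝ) < α + 2 := by linarith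
  -- measurability of the set
  have hfm : Measurable (fun q : ℝ × ℕ => normKhat α q) := by
    unfold normKhat
    exact ((measurable_const.mul measurable_fst.abs).mul
      ((measurable_from_top.comp measurable_snd).add measurable_const))
  have hS : MeasurableSet {q : ℝ × ℕ | normKhat α q < r} :=
    measurableSet_lt hfm measurable_const
  set d : ℕ → ℝ := fun m => 4 * (m : ℝ) + 2 * α + 2 with hd
  have hd0 : ∀ m, (0:ℝ) < d m := fun m => by simp only [hd]; positivity
  set c : ℕ → ℝ := fun m => r / d m with hc
  have hc0 : ∀ m, (0:ℝ) < c m := fun m => div_pos hr (hd0 m)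
  -- nonnegativity of lag0
  have hlag0 : ∀ m : ℕ, 0 ≤ lag0 α m := fun m => by
    have := Real.Gamma_pos_of_pos (show (0:ℝ) < (m:ℝ) + α + 1 by positivity)
    have := m.factorial_pos
    unfold lag0; positivity
  -- each summand measure
  have hmeasval : ∀ m : ℕ,
      Measure.map (fun l : ℝ => (l, m))
        (volume.withDensity (fun l : ℝ => ENNReal.ofReal (lag0 α m * |l| ^ (α + 1))))
        {q : ℝ × ℕ | normKhat α q < r}
      = ENNReal.ofReal (lag0 α m * (2 * c m ^ (α + 2) / (α + 2))) := by
    intro m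
    rw [Measure.map_apply (f := fun l : ℝ => (l, m)) (measurable_id'.prodMk measurable_const) hS]
    have hpre : (fun l : ℝ => (l, m)) ⁻¹' {q : ℝ × ℕ | normKhat α q < r}
        = Set.Ioo (-(c m)) (c m) := by
      ext l
      simp only [Set.mem_preimage, Set.mem_setOf_eq, Set.mem_Ioo, normKhat]
      rw [← abs_lt]
      constructor
      · intro h
        rw [hc, lt_div_iff₀ (hd0 m)]
        calc |l| * d m = 4 * |l| * ((m : ℝ) + (α + 1) / 2) := by simp only [hd]; ring
          _ < r := h
      · intro h
        rw [hc, lt_div_iff₀ (hd0 m)] at h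
        calc 4 * |l| * ((m : ℝ) + (α + 1) / 2) = |l| * d m := by simp only [hd]; ring
          _ < r := h
    rw [hpre, withDensity_apply _ measurableSet_Ioo]
    -- lintegral to integral
    have hcont : Continuous (fun l : ℝ => lag0 α m * |l| ^ (α + 1)) :=
      continuous_const.mul ((Real.continuous_rpow_const (by linarith)).comp continuous_abs)
    have hint : IntegrableOn (fun l : ℝ => lag0 α m * |l| ^ (α + 1))
        (Set.Ioo (-(c m)) (c m)) volume :=
      hcont.integrableOn_Ioc.mono_set Set.Ioo_subset_Ioc_self
    rw [← ofReal_integral_eq_lintegral_ofReal hint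
      (Filter.Eventually.of_forall fun l => by
        have := hlag0 m; positivity)]
    congr 1
    -- compute the integral
    have hcc : -(c m) ≤ c m := by linarith [hc0 m]
    have hii : ∀ a b : ℝ, IntervalIntegrable (fun l : ℝ => |l| ^ (α + 1)) volume a b :=
      fun a b => ((Real.continuous_rpow_const (by linarith)).comp
        continuous_abs).intervalIntegrable a b
    have habs : ∫ l in Set.Ioo (-(c m)) (c m), lag0 α m * |l| ^ (α + 1)
        = ∫ l in (-(c m))..(c m), lag0 α m * |l| ^ (α + 1) := by
      rw [intervalIntegral.integral_of_le hcc, MeasureTheory.integral_Ioc_eq_integral_Ioo]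
    rw [habs, intervalIntegral.integral_const_mul]
    have hpos : ∫ l in (0:ℝ)..(c m), |l| ^ (α + 1) = c m ^ (α + 2) / (α + 2) := by
      rw [intervalIntegral.integral_congr (g := fun l : ℝ => l ^ (α + 1))
        (fun x hx => by
          rw [Set.uIcc_of_le (by linarith [hc0 m] : (0:ℝ) ≤ c m)] at hx
          rw [abs_of_nonneg hx.1])]
      rw [integral_rpow (Or.inl (by linarith))]
      rw [Real.zero_rpow (by linarith : α + 1 + 1 ≠ 0)]
      norm_num
      ring_nf
    have hneg : ∫ l in (-(c m))..(0:ℝ), |l| ^ (α + 1)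
        = ∫ l in (0:ℝ)..(c m), |l| ^ (α + 1) := by
      have := intervalIntegral.integral_comp_neg (a := -(c m)) (b := 0)
        (fun l : ℝ => |l| ^ (α + 1))
      simp only [abs_neg, neg_neg, neg_zero] at this
      rw [← this]
    have hsplit : ∫ l in (-(c m))..(c m), |l| ^ (α + 1)
        = (∫ l in (-(c m))..(0:ℝ), |l| ^ (α + 1)) + ∫ l in (0:ℝ)..(c m), |l| ^ (α + 1) :=
      (intervalIntegral.integral_add_adjacent_intervals (hii _ _) (hii _ _)).symm
    rw [hsplit, hneg, hpos]
    ring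
  rw [gammaAlpha, Measure.sum_apply _ hS]
  simp only [hmeasval]
  -- identify summand with constant * b m
  have hval : ∀ m : ℕ, lag0 α m * (2 * c m ^ (α + 2) / (α + 2))
      = 2 * r ^ (α + 2) / (α + 2) * (lag0 α m / d m ^ (α + 2)) := by
    intro m
    rw [hc, Real.div_rpow hr.le (hd0 m).le]
    field_simp
  simp only [hval]
  rw [← ENNReal.ofReal_tsum_of_nonneg (fun m => by
      have := hlag0 m; have := hd0 m; positivity)
    ((show Summable (fun m : ℕ => lag0 α m / d m ^ (α + 2)) from hb).mul_left _)]
  rw [tsum_mul_left]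
end

section
/- Let α ≥ 0, Q = 2α+4, and b > Q/2. If f ∈ L¹(𝕂, m_α) satisfies |f̂(λ,m)| ≤ min(1, |(λ,m)|^{−b/2}) for γ_α-almost every (λ,m) ∈ 𝕂̂, then f̂ ∈ L²(𝕂̂, γ_α); more precisely, ∫_{𝕂̂} |f̂|² dγ_α ≤ γ_α(E₁) + (2/(b − α − 2)) · Σ_{m≥0} L_m^α(0)/(4m+2α+2)^{α+2} < ∞, where E₁ = {(λ,m) ∈ 𝕂̂ : |(λ,m)| < 1}. -/
open MeasureTheory Real

section AuxProofs

open MeasureTheory Real Set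

variable {α : ℝ}



lemma lag0_zero (hα : 0 ≤ α) : lag0 α 0 = 1 := by
  have h : 0 < Real.Gamma (α + 1) := Real.Gamma_pos_of_pos (by linarith)
  simp [lag0, div_self h.ne']

lemma lag0_succ (hα : 0 ≤ α) (m : ℕ) :
    lag0 α (m + 1) = lag0 α m * ((α + m + 1) / (m + 1)) := by
  have hΓ : 0 < Real.Gamma (α + 1) := Real.Gamma_pos_of_pos (by linarith)
  have hne : ((m : ℝ) + α + 1) ≠ 0 := by positivity
  have h1 : Real.Gamma ((m + 1 : ℕ) + α + 1) = ((m : ℝ) + α + 1) * Real.Gamma (m + α + 1) := by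
    push_cast
    rw [show (m : ℝ) + 1 + α + 1 = ((m : ℝ) + α + 1) + 1 by ring, Real.Gamma_add_one hne]
  have hfact : (((m + 1 : ℕ)).factorial : ℝ) = ((m : ℝ) + 1) * m.factorial := by
    rw [Nat.factorial_succ]; push_cast; ring
  have hmf : (m.factorial : ℝ) ≠ 0 := by positivity
  rw [lag0, lag0, h1, hfact]
  field_simp
  ring

lemma lag0_pos (hα : 0 ≤ α) (m : ℕ) : 0 < lag0 α m := by
  have h1 : 0 < Real.Gamma ((m : ℝ) + α + 1) := Real.Gamma_pos_of_pos (by positivity)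
  have h2 : 0 < Real.Gamma (α + 1) := Real.Gamma_pos_of_pos (by linarith)
  have h3 : (0:ℝ) < m.factorial := by positivity
  exact div_pos h1 (by positivity)

lemma lag0_le (hα : 0 ≤ α) (m : ℕ) : lag0 α m ≤ ((m : ℝ) + 1) ^ (⌈α⌉₊ : ℕ) := by
  induction m with
  | zero => simp [lag0_zero hα]
  | succ m ih =>
    push_cast
    have hm1 : (0:ℝ) < (m : ℝ) + 1 := by positivity
    have hfac : (α + m + 1) / (m + 1) ≤ (((m : ℝ) + 2) / (m + 1)) ^ (⌈α⌉₊ : ℕ) := by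
      have h1 : (α + m + 1) / ((m : ℝ) + 1) = 1 + α * (1 / ((m:ℝ)+1)) := by
        field_simp; ring
      have h2 : 1 + α * (1 / ((m:ℝ)+1)) ≤ 1 + (⌈α⌉₊ : ℝ) * (1 / ((m:ℝ)+1)) := by
        have := Nat.le_ceil α
        have hinv : (0:ℝ) ≤ 1 / ((m:ℝ)+1) := by positivity
        nlinarith
      have h3 : 1 + (⌈α⌉₊ : ℕ) * (1 / ((m:ℝ)+1)) ≤ (1 + 1 / ((m:ℝ)+1)) ^ (⌈α⌉₊ : ℕ) :=
        one_add_mul_le_pow (by have : (0:ℝ) ≤ 1 / ((m:ℝ)+1) := by positivity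
                               linarith) _
      have h4 : (1 + 1 / ((m:ℝ)+1)) = ((m:ℝ) + 2) / ((m:ℝ) + 1) := by field_simp; ring
      rw [h1, ← h4]
      exact le_trans (by push_cast at h3 ⊢; linarith) h3
    calc lag0 α (m + 1) = lag0 α m * ((α + m + 1) / (m + 1)) := lag0_succ hα m
      _ ≤ ((m : ℝ) + 1) ^ (⌈α⌉₊ : ℕ) * (((m : ℝ) + 2) / (m + 1)) ^ (⌈α⌉₊ : ℕ) := by
          apply mul_le_mul ih hfac (div_nonneg (by linarith [show (0:ℝ) ≤ (m:ℝ) from Nat.cast_nonneg m]) (by positivity)) (by positivity)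
      _ = (((m : ℝ) + 1) * (((m : ℝ) + 2) / (m + 1))) ^ (⌈α⌉₊ : ℕ) := (mul_pow _ _ _).symm
      _ = ((m : ℝ) + 1 + 1) ^ (⌈α⌉₊ : ℕ) := by
          rw [mul_div_cancel₀ _ hm1.ne']; ring_nf

lemma summable_lag (hα : 0 ≤ α) :
    Summable (fun m : ℕ => lag0 α m / (4 * (m : ℝ) + 2 * α + 2) ^ (α + 2)) := by
  set p : ℝ := α + 2 - (⌈α⌉₊ : ℝ) with hp
  have hp1 : 1 < p := by
    have := Nat.ceil_lt_add_one hα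
    simp only [hp]; linarith
  have hsum : Summable (fun m : ℕ => ((m : ℝ) + 1) ^ (-p)) := by
    have h := (Real.summable_nat_rpow (p := -p)).2 (by linarith)
    have h2 := (summable_nat_add_iff 1).2 h
    refine h2.congr fun n => ?_
    push_cast; ring_nf
  apply Summable.of_nonneg_of_le (fun m => ?_) (fun m => ?_) hsum
  · have := lag0_pos hα m
    positivity
  · have hm1 : (0:ℝ) < (m : ℝ) + 1 := by positivity
    have hc : (0:ℝ) < 4 * (m : ℝ) + 2 * α + 2 := by positivity
    have hd : ((m : ℝ) + 1) ^ (α + 2) ≤ (4 * (m : ℝ) + 2 * α + 2) ^ (α + 2) :=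
      Real.rpow_le_rpow hm1.le (by linarith) (by linarith)
    have hdpos : (0:ℝ) < ((m : ℝ) + 1) ^ (α + 2) := Real.rpow_pos_of_pos hm1 _
    calc lag0 α m / (4 * (m : ℝ) + 2 * α + 2) ^ (α + 2)
        ≤ ((m : ℝ) + 1) ^ (⌈α⌉₊ : ℕ) / ((m : ℝ) + 1) ^ (α + 2) :=
          div_le_div₀ (by positivity) (lag0_le hα m) hdpos hd
      _ = ((m : ℝ) + 1) ^ (-p) := by
          rw [← Real.rpow_natCast ((m:ℝ)+1) ⌈α⌉₊, ← Real.rpow_sub hm1]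
          congr 1; simp only [hp]; ring







lemma continuous_laguerreL (α : ℝ) (m : ℕ) : Continuous (laguerreL α m) := by
  unfold laguerreL
  apply continuous_finset_sum
  intro k _
  exact ((continuous_const.mul (continuous_pow k)).div_const _)

lemma continuous_phiLag (α : ℝ) (m : ℕ) :
    Continuous (fun x : ℝ × (ℝ × ℝ) => phiLag α x.1 m x.2) := by
  unfold phiLag
  apply Continuous.mul
  · apply Continuous.mul continuous_const
    apply Complex.continuous_exp.comp
    exact (continuous_const.mul (Complex.continuous_ofReal.comp continuous_fst)).mul
      (Complex.continuous_ofReal.comp (continuous_snd.comp continuous_snd))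
  · apply Complex.continuous_ofReal.comp
    have hy : Continuous (fun x : ℝ × (ℝ × ℝ) => |x.1| * x.2.1 ^ 2) :=
      (continuous_abs.comp continuous_fst).mul ((continuous_fst.comp continuous_snd).pow 2)
    exact ((continuous_neg.comp hy).div_const 2).rexp.mul ((continuous_laguerreL α m).comp hy)

lemma measurable_normKhat (α : ℝ) : Measurable (normKhat α) := by
  unfold normKhat
  apply Measurable.mul
  · exact measurable_const.mul measurable_fst.abs
  · exact ((measurable_from_top (f := (Nat.cast : ℕ → ℝ))).comp measurable_snd).add measurable_const

instance sigmaFinite_mAlpha (α : ℝ) : SigmaFinite (mAlpha α) := by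
  unfold mAlpha
  have h : (fun q : ℝ × ℝ =>
      if 0 ≤ q.1 then ENNReal.ofReal ((Real.pi * Real.Gamma (α + 1))⁻¹ * q.1 ^ (2 * α + 1)) else 0)
      = fun q => ENNReal.ofReal
        (if 0 ≤ q.1 then (Real.pi * Real.Gamma (α + 1))⁻¹ * q.1 ^ (2 * α + 1) else 0) := by
    funext q; split <;> simp
  rw [h]
  infer_instance

set_option maxHeartbeats 1000000 in
lemma stronglyMeasurable_FL (α : ℝ) {f : ℝ × ℝ → ℂ} (hf : StronglyMeasurable f) :
    StronglyMeasurable (fourierLaguerre α f) := by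
  have hFm : StronglyMeasurable (fun z : (ℝ × ℕ) × (ℝ × ℝ) =>
      f z.2 * phiLag α (-z.1.1) z.1.2 z.2) := by
    apply Measurable.stronglyMeasurable
    apply Measurable.mul (hf.measurable.comp measurable_snd)
    have hH : Measurable (fun w : (ℝ × (ℝ × ℝ)) × ℕ => phiLag α (-w.1.1) w.2 w.1.2) := by
      apply measurable_from_prod_countable_left
      intro m
      exact ((continuous_phiLag α m).comp
        ((continuous_neg.comp continuous_fst).prodMk continuous_snd)).measurable
    show Measurable ((fun w : (ℝ × (ℝ × ℝ)) × ℕ => phiLag α (-w.1.1) w.2 w.1.2) ∘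
      (fun z : (ℝ × ℕ) × (ℝ × ℝ) => ((z.1.1, z.2), z.1.2)))
    exact hH.comp ((measurable_fst.fst.prodMk measurable_snd).prodMk measurable_fst.snd)
  unfold fourierLaguerre
  exact hFm.integral_prod_right'

lemma key3_lemma (α b : ℝ) (hα : 0 ≤ α) (hb' : α + 2 < b) :
    (∫⁻ q in {q : ℝ × ℕ | normKhat α q < 1}ᶜ,
      ENNReal.ofReal (normKhat α q ^ (-b)) ∂(gammaAlpha α))
    ≤ ENNReal.ofReal (2 / (b - α - 2) *
        ∑' m : ℕ, lag0 α m / (4 * (m : ℝ) + 2 * α + 2) ^ (α + 2)) := by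
  have hNmeas := measurable_normKhat α
  have hE : MeasurableSet {q : ℝ × ℕ | normKhat α q < 1} :=
    measurableSet_lt hNmeas measurable_const
  have hg : Measurable (fun q : ℝ × ℕ => ENNReal.ofReal (normKhat α q ^ (-b))) := by
    apply Measurable.ennreal_ofReal
    fun_prop
  have hind := hg.indicator hE.compl
  rw [← lintegral_indicator hE.compl]
  unfold gammaAlpha
  rw [lintegral_sum_measure]
  have hS := summable_lag hα
  have hSnn : ∀ m : ℕ, 0 ≤ lag0 α m / (4 * (m : ℝ) + 2 * α + 2) ^ (α + 2) := by
    intro m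
    have := (lag0_pos hα m).le
    positivity
  have hper : ∀ m : ℕ,
      (∫⁻ l, ({q : ℝ × ℕ | normKhat α q < 1}ᶜ.indicator
          (fun q => ENNReal.ofReal (normKhat α q ^ (-b)))) (l, m) ∂
        (volume.withDensity (fun l : ℝ => ENNReal.ofReal (lag0 α m * |l| ^ (α + 1)))))
      ≤ ENNReal.ofReal (2 / (b - α - 2) *
          (lag0 α m / (4 * (m : ℝ) + 2 * α + 2) ^ (α + 2))) := by
    intro m
    have hc : (0:ℝ) < 4 * (m:ℝ) + 2 * α + 2 := by positivity
    set c : ℝ := 4 * (m:ℝ) + 2 * α + 2 with hcdef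
    set r : ℝ := c⁻¹ with hrdef
    have hr : 0 < r := by positivity
    set K : ℝ := lag0 α m * c ^ (-b) with hKdef
    have hK : 0 ≤ K := mul_nonneg (lag0_pos hα m).le (Real.rpow_nonneg hc.le _)
    set p : ℝ := α + 1 - b with hpdef
    have hp : p < -1 := by rw [hpdef]; linarith
    have hNq : ∀ l : ℝ, normKhat α (l, m) = c * |l| := by
      intro l
      simp only [normKhat, hcdef]
      ring
    have hdensmeas : Measurable (fun l : ℝ => ENNReal.ofReal (lag0 α m * |l| ^ (α + 1))) := by
      apply Measurable.ennreal_ofReal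
      fun_prop
    have hg2 : Measurable (fun l : ℝ => ({q : ℝ × ℕ | normKhat α q < 1}ᶜ.indicator
        (fun q => ENNReal.ofReal (normKhat α q ^ (-b)))) (l, m)) :=
      hind.comp measurable_prodMk_right
    rw [lintegral_withDensity_eq_lintegral_mul _ hdensmeas hg2]
    have hmeasF : Measurable (fun l : ℝ => ENNReal.ofReal (K * |l| ^ p)) := by
      apply Measurable.ennreal_ofReal
      fun_prop
    have hpt : ∀ l : ℝ,
        ((fun l : ℝ => ENNReal.ofReal (lag0 α m * |l| ^ (α + 1))) *
          (fun l : ℝ => ({q : ℝ × ℕ | normKhat α q < 1}ᶜ.indicator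
            (fun q => ENNReal.ofReal (normKhat α q ^ (-b)))) (l, m))) l
        ≤ (Set.Iic (-r) ∪ Set.Ici r).indicator
            (fun l => ENNReal.ofReal (K * |l| ^ p)) l := by
      intro l
      simp only [Pi.mul_apply]
      by_cases hmem : (l, m) ∈ {q : ℝ × ℕ | normKhat α q < 1}ᶜ
      · have h1 : (1:ℝ) ≤ c * |l| := by
          have := not_lt.1 (Set.mem_compl_iff _ _ |>.1 hmem |> fun h => by
            simpa [Set.mem_setOf_eq] using h)
          rwa [hNq] at this
        have hl0 : 0 < |l| := by nlinarith [abs_nonneg l]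
        have hrc : r * c = 1 := inv_mul_cancel₀ hc.ne'
        have hlr : r ≤ |l| := by nlinarith
        have hmemU : l ∈ Set.Iic (-r) ∪ Set.Ici r := by
          rcases le_abs'.1 hlr with h | h
          · exact Or.inl h
          · exact Or.inr h
        rw [Set.indicator_of_mem hmem, Set.indicator_of_mem hmemU, hNq]
        rw [← ENNReal.ofReal_mul (mul_nonneg (lag0_pos hα m).le
          (Real.rpow_nonneg (abs_nonneg l) _))]
        apply ENNReal.ofReal_le_ofReal
        have heq : K * |l| ^ p = lag0 α m * |l| ^ (α + 1) * (c * |l|) ^ (-b) := by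
          rw [Real.mul_rpow hc.le (abs_nonneg l), hKdef, hpdef,
            show α + 1 - b = (α + 1) + (-b) by ring, Real.rpow_add hl0]
          ring
        rw [heq]
      · rw [Set.indicator_of_notMem hmem, mul_zero]
        exact zero_le
    have hIic : (∫⁻ l in Set.Iic (-r), ENNReal.ofReal (K * |l| ^ p))
        = ∫⁻ l in Set.Ici r, ENNReal.ofReal (K * |l| ^ p) := by
      have hpre : Neg.neg ⁻¹' (Set.Iic (-r)) = Set.Ici r := by
        ext x
        simp [Set.mem_Iic, Set.mem_Ici]
      have hres : (volume : Measure ℝ).restrict (Set.Iic (-r)) =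
          Measure.map Neg.neg ((volume : Measure ℝ).restrict (Set.Ici r)) := by
        calc (volume : Measure ℝ).restrict (Set.Iic (-r))
            = (Measure.map Neg.neg volume).restrict (Set.Iic (-r)) := by
              rw [Measure.map_neg_eq_self]
          _ = Measure.map Neg.neg (volume.restrict (Neg.neg ⁻¹' (Set.Iic (-r)))) :=
              Measure.restrict_map measurable_neg measurableSet_Iic
          _ = Measure.map Neg.neg (volume.restrict (Set.Ici r)) := by rw [hpre]
      rw [hres, lintegral_map hmeasF measurable_neg]
      simp only [abs_neg]
    have hint : IntegrableOn (fun l : ℝ => K * |l| ^ p) (Set.Ici r) := by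
      have h1 : IntegrableOn (fun t : ℝ => K * t ^ p) (Set.Ici r) :=
        (integrableOn_Ici_iff_integrableOn_Ioi (hb := ENNReal.coe_ne_top)).2
          ((integrableOn_Ioi_rpow_of_lt hp hr).const_mul K)
      exact h1.congr_fun (fun x hx => by rw [abs_of_pos (hr.trans_le hx)]) measurableSet_Ici
    have hval : (∫ l in Set.Ici r, K * |l| ^ p) = K * (r ^ (p + 1) / (b - α - 2)) := by
      rw [MeasureTheory.integral_Ici_eq_integral_Ioi,
        setIntegral_congr_fun measurableSet_Ioi
          (fun x hx => by rw [abs_of_pos (hr.trans hx)]),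
        MeasureTheory.integral_const_mul K fun x => x ^ p, integral_Ioi_rpow_of_lt hp hr,
        show p + 1 = -(b - α - 2) by rw [hpdef]; ring]
      rw [neg_div, div_neg, neg_neg]
    have htail : (∫⁻ l in Set.Ici r, ENNReal.ofReal (K * |l| ^ p))
        = ENNReal.ofReal (K * (r ^ (p + 1) / (b - α - 2))) := by
      rw [← MeasureTheory.ofReal_integral_eq_lintegral_ofReal hint
        (Filter.Eventually.of_forall (fun l =>
          mul_nonneg hK (Real.rpow_nonneg (abs_nonneg l) p))), hval]
    calc (∫⁻ l, ((fun l : ℝ => ENNReal.ofReal (lag0 α m * |l| ^ (α + 1))) *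
            (fun l : ℝ => ({q : ℝ × ℕ | normKhat α q < 1}ᶜ.indicator
              (fun q => ENNReal.ofReal (normKhat α q ^ (-b)))) (l, m))) l)
        ≤ ∫⁻ l, (Set.Iic (-r) ∪ Set.Ici r).indicator
            (fun l => ENNReal.ofReal (K * |l| ^ p)) l := lintegral_mono hpt
      _ = ∫⁻ l in Set.Iic (-r) ∪ Set.Ici r, ENNReal.ofReal (K * |l| ^ p) :=
          lintegral_indicator (measurableSet_Iic.union measurableSet_Ici) _
      _ ≤ (∫⁻ l in Set.Iic (-r), ENNReal.ofReal (K * |l| ^ p))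
            + ∫⁻ l in Set.Ici r, ENNReal.ofReal (K * |l| ^ p) :=
          lintegral_union_le _ _ _
      _ = 2 * ENNReal.ofReal (K * (r ^ (p + 1) / (b - α - 2))) := by
          rw [hIic, htail, two_mul]
      _ = ENNReal.ofReal (2 / (b - α - 2) * (lag0 α m / c ^ (α + 2))) := by
          rw [show (2 : ENNReal) = ENNReal.ofReal (2:ℝ) by simp,
            ← ENNReal.ofReal_mul (by norm_num)]
          congr 1
          have e1 : r ^ (p + 1) = c ^ (-(p + 1)) := by
            rw [hrdef, Real.inv_rpow hc.le, ← Real.rpow_neg hc.le]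
          have e2 : c ^ (-b) * c ^ (-(p + 1)) = (c ^ (α + 2))⁻¹ := by
            rw [← Real.rpow_add hc, show -b + -(p + 1) = -(α + 2) by rw [hpdef]; ring,
              Real.rpow_neg hc.le]
          calc 2 * (K * (r ^ (p + 1) / (b - α - 2)))
              = 2 * (lag0 α m * (c ^ (-b) * r ^ (p + 1)) / (b - α - 2)) := by
                rw [hKdef]; ring
            _ = 2 * (lag0 α m * (c ^ (α + 2))⁻¹ / (b - α - 2)) := by rw [e1, e2]
            _ = 2 / (b - α - 2) * (lag0 α m / c ^ (α + 2)) := by ring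
  calc (∑' m : ℕ, ∫⁻ q, ({q : ℝ × ℕ | normKhat α q < 1}ᶜ.indicator
          (fun q => ENNReal.ofReal (normKhat α q ^ (-b)))) q ∂
        (Measure.map (fun l : ℝ => (l, m))
          (volume.withDensity (fun l : ℝ => ENNReal.ofReal (lag0 α m * |l| ^ (α + 1))))))
      = ∑' m : ℕ, ∫⁻ l, ({q : ℝ × ℕ | normKhat α q < 1}ᶜ.indicator
          (fun q => ENNReal.ofReal (normKhat α q ^ (-b)))) (l, m) ∂
        (volume.withDensity (fun l : ℝ => ENNReal.ofReal (lag0 α m * |l| ^ (α + 1)))) := by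
        congr 1
        funext m
        rw [lintegral_map hind measurable_prodMk_right]
    _ ≤ ∑' m : ℕ, ENNReal.ofReal (2 / (b - α - 2) *
          (lag0 α m / (4 * (m : ℝ) + 2 * α + 2) ^ (α + 2))) := ENNReal.tsum_le_tsum hper
    _ = ENNReal.ofReal (∑' m : ℕ, 2 / (b - α - 2) *
          (lag0 α m / (4 * (m : ℝ) + 2 * α + 2) ^ (α + 2))) :=
        (ENNReal.ofReal_tsum_of_nonneg (fun m => mul_nonneg
          (div_nonneg (by norm_num) (by linarith)) (hSnn m)) (hS.mul_left _)).symm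
    _ = ENNReal.ofReal (2 / (b - α - 2) *
          ∑' m : ℕ, lag0 α m / (4 * (m : ℝ) + 2 * α + 2) ^ (α + 2)) := by
        rw [tsum_mul_left]

lemma hEfin_lemma (α : ℝ) (hα : 0 ≤ α) :
    gammaAlpha α {q : ℝ × ℕ | normKhat α q < 1} < ⊤ := by
  have hE : MeasurableSet {q : ℝ × ℕ | normKhat α q < 1} :=
    measurableSet_lt (measurable_normKhat α) measurable_const
  unfold gammaAlpha
  rw [Measure.sum_apply _ hE]
  have hS := summable_lag hα
  have hSnn : ∀ m : ℕ, 0 ≤ lag0 α m / (4 * (m : ℝ) + 2 * α + 2) ^ (α + 2) := by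
    intro m
    have := (lag0_pos hα m).le
    positivity
  have hper : ∀ m : ℕ, (Measure.map (fun l : ℝ => (l, m))
      (volume.withDensity (fun l : ℝ => ENNReal.ofReal (lag0 α m * |l| ^ (α + 1)))))
      {q : ℝ × ℕ | normKhat α q < 1}
      ≤ ENNReal.ofReal (2 * (lag0 α m / (4 * (m : ℝ) + 2 * α + 2) ^ (α + 2))) := by
    intro m
    have hc : (0:ℝ) < 4 * (m:ℝ) + 2 * α + 2 := by positivity
    set c : ℝ := 4 * (m:ℝ) + 2 * α + 2 with hcdef
    set r : ℝ := c⁻¹ with hrdef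
    have hr : 0 < r := by positivity
    have hNq : ∀ l : ℝ, normKhat α (l, m) = c * |l| := by
      intro l
      simp only [normKhat, hcdef]
      ring
    rw [Measure.map_apply measurable_prodMk_right hE]
    have hsub : (fun l : ℝ => (l, m)) ⁻¹' {q : ℝ × ℕ | normKhat α q < 1}
        ⊆ Set.Ioo (-r) r := by
      intro l hl
      simp only [Set.mem_preimage, Set.mem_setOf_eq, hNq] at hl
      have hrc : r * c = 1 := inv_mul_cancel₀ hc.ne'
      have h1 : |l| < r := by nlinarith [abs_nonneg l]
      exact abs_lt.1 h1
    calc (volume.withDensity fun l : ℝ => ENNReal.ofReal (lag0 α m * |l| ^ (α + 1)))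
          ((fun l : ℝ => (l, m)) ⁻¹' {q : ℝ × ℕ | normKhat α q < 1})
        ≤ (volume.withDensity fun l : ℝ => ENNReal.ofReal (lag0 α m * |l| ^ (α + 1)))
          (Set.Ioo (-r) r) := measure_mono hsub
      _ = ∫⁻ l in Set.Ioo (-r) r, ENNReal.ofReal (lag0 α m * |l| ^ (α + 1)) :=
          withDensity_apply _ measurableSet_Ioo
      _ ≤ ∫⁻ _ in Set.Ioo (-r) r, ENNReal.ofReal (lag0 α m * r ^ (α + 1)) := by
          apply setLIntegral_mono measurable_const
          intro l hl
          apply ENNReal.ofReal_le_ofReal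
          apply mul_le_mul_of_nonneg_left _ (lag0_pos hα m).le
          apply Real.rpow_le_rpow (abs_nonneg l) _ (by linarith)
          exact (abs_lt.2 hl).le
      _ = ENNReal.ofReal (lag0 α m * r ^ (α + 1)) * volume (Set.Ioo (-r) r) :=
          setLIntegral_const _ _
      _ = ENNReal.ofReal (2 * (lag0 α m / c ^ (α + 2))) := by
          rw [Real.volume_Ioo, ← ENNReal.ofReal_mul
            (mul_nonneg (lag0_pos hα m).le (Real.rpow_nonneg hr.le _))]
          congr 1
          have e1 : r ^ (α + 1) * r = (c ^ (α + 2))⁻¹ := by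
            nth_rewrite 2 [← Real.rpow_one r]
            rw [← Real.rpow_add hr, show α + 1 + 1 = α + 2 by ring, hrdef,
              Real.inv_rpow hc.le]
          calc lag0 α m * r ^ (α + 1) * (r - -r)
              = 2 * (lag0 α m * (r ^ (α + 1) * r)) := by ring
            _ = 2 * (lag0 α m / c ^ (α + 2)) := by rw [e1]; ring
  calc (∑' m : ℕ, (Measure.map (fun l : ℝ => (l, m))
        (volume.withDensity (fun l : ℝ => ENNReal.ofReal (lag0 α m * |l| ^ (α + 1)))))
        {q : ℝ × ℕ | normKhat α q < 1})
      ≤ ∑' m : ℕ, ENNReal.ofReal (2 * (lag0 α m / (4 * (m : ℝ) + 2 * α + 2) ^ (α + 2))) :=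
        ENNReal.tsum_le_tsum hper
    _ = ENNReal.ofReal (∑' m : ℕ,
          2 * (lag0 α m / (4 * (m : ℝ) + 2 * α + 2) ^ (α + 2))) :=
        (ENNReal.ofReal_tsum_of_nonneg (fun m => mul_nonneg (by norm_num) (hSnn m))
          (hS.mul_left 2)).symm
    _ < ⊤ := ENNReal.ofReal_lt_top

end AuxProofs

/-- for `α ≥ 0`, `Q = 2α+4`, `b > Q/2`, if `f ∈ L¹(𝕂, m_α)` satisfies
`|f̂(λ,m)| ≤ min(1, |(λ,m)|^{−b/2})` for `γ_α`-a.e. `(λ,m)`, then `f̂ ∈ L²(𝕂̂, γ_α)`; more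
precisely `∫ |f̂|² dγ_α ≤ γ_α(E₁) + (2/(b−α−2)) Σ_m L_m^α(0)/(4m+2α+2)^{α+2} < ∞`. -/
theorem stmt12 (α b : ℝ) (hα : 0 ≤ α) (hb : b > (2 * α + 4) / 2)
    (f : ℝ × ℝ → ℂ) (hf : MeasureTheory.MemLp f 1 (mAlpha α))
    (hbound : ∀ᵐ q ∂(gammaAlpha α),
      ‖fourierLaguerre α f q‖ ≤ min 1 (normKhat α q ^ (-(b / 2)))) :
    MeasureTheory.MemLp (fourierLaguerre α f) 2 (gammaAlpha α) ∧
    (∫⁻ q, (‖fourierLaguerre α f q‖₊ : ENNReal) ^ (2 : ℝ) ∂(gammaAlpha α)) ≤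
      gammaAlpha α {q : ℝ × ℕ | normKhat α q < 1} +
        ENNReal.ofReal (2 / (b - α - 2) *
          ∑' m : ℕ, lag0 α m / (4 * (m : ℝ) + 2 * α + 2) ^ (α + 2)) ∧
    gammaAlpha α {q : ℝ × ℕ | normKhat α q < 1} +
        ENNReal.ofReal (2 / (b - α - 2) *
          ∑' m : ℕ, lag0 α m / (4 * (m : ℝ) + 2 * α + 2) ^ (α + 2)) < ⊤ := by
  have hb' : α + 2 < b := by linarith
  have hΓ : 0 < Real.Gamma (α + 1) := Real.Gamma_pos_of_pos (by linarith)
  have hNmeas := measurable_normKhat α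
  have hE : MeasurableSet {q : ℝ × ℕ | normKhat α q < 1} :=
    measurableSet_lt hNmeas measurable_const
  have hNnn : ∀ q : ℝ × ℕ, 0 ≤ normKhat α q := by
    intro q
    exact mul_nonneg (by positivity) (add_nonneg (Nat.cast_nonneg _) (by linarith))
  have hS := summable_lag hα
  have hSnn : ∀ m : ℕ, 0 ≤ lag0 α m / (4 * (m : ℝ) + 2 * α + 2) ^ (α + 2) := by
    intro m
    have := (lag0_pos hα m).le
    positivity
  -- the tail bound for the second region
  have key3 : ∫⁻ q in {q : ℝ × ℕ | normKhat α q < 1}ᶜ,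
      ENNReal.ofReal (normKhat α q ^ (-b)) ∂(gammaAlpha α)
      ≤ ENNReal.ofReal (2 / (b - α - 2) *
          ∑' m : ℕ, lag0 α m / (4 * (m : ℝ) + 2 * α + 2) ^ (α + 2)) :=
    key3_lemma α b hα hb'
  -- finiteness of γ(E₁)
  have hEfin : gammaAlpha α {q : ℝ × ℕ | normKhat α q < 1} < ⊤ := hEfin_lemma α hα
  -- main integral bound
  have main : (∫⁻ q, (‖fourierLaguerre α f q‖₊ : ENNReal) ^ (2 : ℝ) ∂(gammaAlpha α)) ≤
      gammaAlpha α {q : ℝ × ℕ | normKhat α q < 1} +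
        ENNReal.ofReal (2 / (b - α - 2) *
          ∑' m : ℕ, lag0 α m / (4 * (m : ℝ) + 2 * α + 2) ^ (α + 2)) := by
    rw [← lintegral_add_compl (fun q => (‖fourierLaguerre α f q‖₊ : ENNReal) ^ (2 : ℝ)) hE]
    gcongr
    · -- on E₁
      calc ∫⁻ q in {q : ℝ × ℕ | normKhat α q < 1},
            (‖fourierLaguerre α f q‖₊ : ENNReal) ^ (2 : ℝ) ∂(gammaAlpha α)
          ≤ ∫⁻ _ in {q : ℝ × ℕ | normKhat α q < 1}, 1 ∂(gammaAlpha α) := by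
            apply lintegral_mono_ae
            filter_upwards [ae_restrict_of_ae hbound] with q hq
            have h1 : (‖fourierLaguerre α f q‖₊ : ENNReal) ≤ 1 := by
              rw [← ENNReal.ofReal_coe_nnreal, coe_nnnorm]
              calc ENNReal.ofReal ‖fourierLaguerre α f q‖ ≤ ENNReal.ofReal 1 :=
                ENNReal.ofReal_le_ofReal (hq.trans (min_le_left _ _))
              _ = 1 := ENNReal.ofReal_one
            calc (‖fourierLaguerre α f q‖₊ : ENNReal) ^ (2:ℝ) ≤ (1:ENNReal) ^ (2:ℝ) :=
              ENNReal.rpow_le_rpow h1 (by norm_num)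
            _ = 1 := ENNReal.one_rpow _
        _ = gammaAlpha α {q : ℝ × ℕ | normKhat α q < 1} := setLIntegral_one _
    · -- on E₁ᶜ
      refine le_trans ?_ key3
      apply lintegral_mono_ae
      filter_upwards [ae_restrict_of_ae hbound, ae_restrict_mem hE.compl] with q hq hq'
      have hq1 : (1:ℝ) ≤ normKhat α q := not_lt.1 hq'
      calc (‖fourierLaguerre α f q‖₊ : ENNReal) ^ (2:ℝ)
          = (ENNReal.ofReal ‖fourierLaguerre α f q‖) ^ (2:ℝ) := by
            rw [← ENNReal.ofReal_coe_nnreal, coe_nnnorm]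
        _ ≤ (ENNReal.ofReal (normKhat α q ^ (-(b/2)))) ^ (2:ℝ) :=
            ENNReal.rpow_le_rpow
              (ENNReal.ofReal_le_ofReal (hq.trans (min_le_right _ _))) (by norm_num)
        _ = ENNReal.ofReal ((normKhat α q ^ (-(b/2))) ^ (2:ℝ)) :=
            ENNReal.ofReal_rpow_of_nonneg (Real.rpow_nonneg (hNnn q) _) (by norm_num)
        _ = ENNReal.ofReal (normKhat α q ^ (-b)) := by
            rw [← Real.rpow_mul (hNnn q)]
            congr 1
            ring
  refine ⟨?_, main, ?_⟩
  · -- Memℒp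
    obtain ⟨f', hf'meas, hff'⟩ := hf.aestronglyMeasurable
    have hFeq : fourierLaguerre α f = fourierLaguerre α f' := by
      funext p
      exact integral_congr_ae (hff'.mono fun q hq => by dsimp only; rw [hq])
    have hFm : AEStronglyMeasurable (fourierLaguerre α f) (gammaAlpha α) := by
      rw [hFeq]
      exact (stronglyMeasurable_FL α hf'meas).aestronglyMeasurable
    refine ⟨hFm, ?_⟩
    rw [eLpNorm_eq_lintegral_rpow_enorm_toReal (by norm_num) (by norm_num)]
    have h2 : ((2:ENNReal).toReal) = (2:ℝ) := by norm_num
    rw [h2]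
    apply ENNReal.rpow_lt_top_of_nonneg (by norm_num)
    exact (lt_of_le_of_lt main (lt_of_le_of_lt (le_refl _)
      (ENNReal.add_lt_top.2 ⟨hEfin, ENNReal.ofReal_lt_top⟩))).ne
  · exact ENNReal.add_lt_top.2 ⟨hEfin, ENNReal.ofReal_lt_top⟩
end
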